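/- Let E be a real Banach space, T > 0, M > 0. Let a : [0, T] → E be continuous, and let b, σ : {(t, s) : 0 ≤ s ≤ t ≤ T} → (E →L E) be continuous with ‖b(t, s)‖ ≤ M and ‖σ(t, s)‖ ≤ M for all 0 ≤ s ≤ t ≤ T, and let N : [0, T] → (E →L E) be continuous. Then there exists a unique continuous function U : [0, T] → E satisfying U(t) = a(t) + ∫₀ᵗ b(t, s)(U(s)) ds + ∫₀ᵗ σ(t, s)(N(s)(U(s))) ds for all t ∈ [0, T]. -/

import Mathlib

open Set MeasureTheory

/-!
The solution is a fixed point of the Volterra operator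
`Φ x t = a t + ∫₀ᵗ K t s (x s) ds` on `C([0, T], E)`. If `‖K‖ ≤ L` on `[0, T]²`, induction gives
`‖Φⁿ x t - Φⁿ y t‖ ≤ (L t)ⁿ / n! · ‖x - y‖`, so some iterate of `Φ` is a contraction and Banach's
fixed point theorem applies. Data that are only continuous on `[0, T]` and on the triangle
`0 ≤ s ≤ t ≤ T` are first extended continuously to the whole line and plane, which does not change
the equation on `[0, T]`. The theorem is the case `K t s = b t s + σ t s ∘ N s`.
-/

theorem Function.existsUnique_isFixedPt_of_dist_iterate_le {X : Type*} [MetricSpace X]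
    [CompleteSpace X] [Nonempty X] {f : X → X} {C : ℝ} (hC : 0 ≤ C)
    (hf : ∀ n x y, dist (f^[n] x) (f^[n] y) ≤ C ^ n / n.factorial * dist x y) :
    ∃! x, Function.IsFixedPt f x := by
  obtain ⟨n, hn⟩ : ∃ n : ℕ, C ^ n / n.factorial < 1 :=
    ((FloorSemiring.tendsto_pow_div_factorial_atTop C).eventually (gt_mem_nhds one_pos)).exists
  have hcontr : ContractingWith (C ^ n / n.factorial).toNNReal f^[n] :=
    ⟨by rwa [Real.toNNReal_lt_one], LipschitzWith.of_dist_le_mul fun x y => by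
      rw [Real.coe_toNNReal _ (by positivity)]; exact hf n x y⟩
  exact ⟨_, hcontr.isFixedPt_fixedPoint_iterate,
    fun y hy => hcontr.fixedPoint_unique (hy.iterate n)⟩

section VolterraOperator

variable {E : Type*} [NormedAddCommGroup E] [NormedSpace ℝ E] {T : ℝ} {a : ℝ → E}
  {K : ℝ → ℝ → E →L[ℝ] E}

noncomputable def volterraOperator (hT : 0 ≤ T) (ha : Continuous a)
    (hK : Continuous fun p : ℝ × ℝ => K p.1 p.2) (x : C(Icc 0 T, E)) : C(Icc 0 T, E) where
  toFun t := a t + ∫ s in (0:ℝ)..t, K t s (IccExtend hT x s)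
  continuous_toFun := (ha.comp continuous_subtype_val).add <|
    intervalIntegral.continuous_parametric_intervalIntegral_of_continuous
      ((hK.comp (continuous_subtype_val.prodMap continuous_id)).clm_apply
        (x.continuous.Icc_extend'.comp continuous_snd)) continuous_subtype_val

variable (hT : 0 ≤ T) (ha : Continuous a) (hK : Continuous fun p : ℝ × ℝ => K p.1 p.2)

theorem volterraOperator_apply (x : C(Icc 0 T, E)) (t : Icc 0 T) :
    volterraOperator hT ha hK x t = a t + ∫ s in (0:ℝ)..t, K t s (IccExtend hT x s) :=
  rfl

theorem dist_volterraOperator_apply_le {L : ℝ}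
    (hKL : ∀ t ∈ Icc 0 T, ∀ s ∈ Icc 0 T, ‖K t s‖ ≤ L) {x y : C(Icc 0 T, E)} {g : ℝ → ℝ}
    (hg : Continuous g) (t : Icc 0 T) (hxy : ∀ s : Icc 0 T, (s : ℝ) ≤ t → dist (x s) (y s) ≤ g s) :
    dist (volterraOperator hT ha hK x t) (volterraOperator hT ha hK y t) ≤
      L * ∫ s in (0:ℝ)..t, g s := by
  have hint (z : C(Icc 0 T, E)) :
      IntervalIntegrable (fun s => K t s (IccExtend hT z s)) volume 0 t :=
    ((hK.comp (continuous_const.prodMk continuous_id)).clm_apply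
      z.continuous.Icc_extend').intervalIntegrable _ _
  rw [volterraOperator_apply, volterraOperator_apply, dist_add_left, dist_eq_norm,
    ← intervalIntegral.integral_sub (hint x) (hint y), ← intervalIntegral.integral_const_mul]
  refine intervalIntegral.norm_integral_le_of_norm_le t.2.1 (ae_of_all _ fun s hs => ?_)
    ((hg.const_mul L).intervalIntegrable _ _)
  have hs' : s ∈ Icc 0 T := ⟨hs.1.le, hs.2.trans t.2.2⟩
  have hKts := hKL t t.2 s hs'
  calc ‖K t s (IccExtend hT x s) - K t s (IccExtend hT y s)‖
      = ‖K t s (x ⟨s, hs'⟩ - y ⟨s, hs'⟩)‖ := by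
        rw [map_sub, IccExtend_of_mem hT x hs', IccExtend_of_mem hT y hs']
    _ ≤ ‖K t s‖ * dist (x ⟨s, hs'⟩) (y ⟨s, hs'⟩) := by
        rw [dist_eq_norm]; exact (K t s).le_opNorm _
    _ ≤ L * g s :=
        mul_le_mul hKts (hxy ⟨s, hs'⟩ hs.2) dist_nonneg ((norm_nonneg _).trans hKts)

theorem dist_iterate_volterraOperator_apply_le {L : ℝ}
    (hKL : ∀ t ∈ Icc 0 T, ∀ s ∈ Icc 0 T, ‖K t s‖ ≤ L) (n : ℕ) (x y : C(Icc 0 T, E))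
    (t : Icc 0 T) :
    dist ((volterraOperator hT ha hK)^[n] x t) ((volterraOperator hT ha hK)^[n] y t) ≤
      (L * t) ^ n / n.factorial * dist x y := by
  induction n generalizing t with
  | zero => simpa using ContinuousMap.dist_apply_le_dist t
  | succ n ih =>
    rw [Function.iterate_succ_apply', Function.iterate_succ_apply']
    refine (dist_volterraOperator_apply_le hT ha hK hKL
      (g := fun s => (L * s) ^ n / n.factorial * dist x y) (by fun_prop) t
      fun s _ => ih s).trans_eq ?_
    have hfun : (fun s : ℝ => (L * s) ^ n / n.factorial * dist x y) =
        fun s => L ^ n / n.factorial * dist x y * s ^ n := by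
      ext s; ring
    rw [hfun, intervalIntegral.integral_const_mul, integral_pow, Nat.factorial_succ]
    push_cast
    field_simp
    ring

theorem dist_iterate_volterraOperator_le {L : ℝ}
    (hKL : ∀ t ∈ Icc 0 T, ∀ s ∈ Icc 0 T, ‖K t s‖ ≤ L) (n : ℕ) (x y : C(Icc 0 T, E)) :
    dist ((volterraOperator hT ha hK)^[n] x) ((volterraOperator hT ha hK)^[n] y) ≤
      (L * T) ^ n / n.factorial * dist x y := by
  have hL : 0 ≤ L := (norm_nonneg _).trans (hKL 0 ⟨le_rfl, hT⟩ 0 ⟨le_rfl, hT⟩)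
  refine (ContinuousMap.dist_le (by positivity)).2 fun t =>
    (dist_iterate_volterraOperator_apply_le hT ha hK hKL n x y t).trans ?_
  gcongr
  exacts [mul_nonneg hL t.2.1, t.2.2]

theorem existsUnique_isFixedPt_volterraOperator [CompleteSpace E] :
    ∃! x, Function.IsFixedPt (volterraOperator hT ha hK) x := by
  obtain ⟨L, hL⟩ := (isCompact_Icc.prod isCompact_Icc).exists_bound_of_continuousOn
    hK.continuousOn
  have hKL : ∀ t ∈ Icc 0 T, ∀ s ∈ Icc 0 T, ‖K t s‖ ≤ L := fun t ht s hs => hL (t, s) ⟨ht, hs⟩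
  have hL0 : 0 ≤ L := (norm_nonneg _).trans (hKL 0 ⟨le_rfl, hT⟩ 0 ⟨le_rfl, hT⟩)
  exact Function.existsUnique_isFixedPt_of_dist_iterate_le (mul_nonneg hL0 hT)
    (dist_iterate_volterraOperator_le hT ha hK hKL)

end VolterraOperator

section VolterraSolution

variable {E : Type*} [NormedAddCommGroup E] [NormedSpace ℝ E] {T : ℝ} {a : ℝ → E}
  {K : ℝ → ℝ → E →L[ℝ] E}

def IsVolterraSolution (T : ℝ) (a : ℝ → E) (K : ℝ → ℝ → E →L[ℝ] E) (U : ℝ → E) : Prop :=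
  ContinuousOn U (Icc 0 T) ∧ ∀ t ∈ Icc 0 T, U t = a t + ∫ s in (0:ℝ)..t, K t s (U s)

theorem isVolterraSolution_congr {a' U U' : ℝ → E} {K' : ℝ → ℝ → E →L[ℝ] E}
    (ha : EqOn a a' (Icc 0 T)) (hK : ∀ t ∈ Icc 0 T, ∀ s ∈ Icc 0 t, K t s = K' t s)
    (hU : EqOn U U' (Icc 0 T)) :
    IsVolterraSolution T a K U ↔ IsVolterraSolution T a' K' U' := by
  refine and_congr (continuousOn_congr hU) (forall₂_congr fun t ht => ?_)
  have hint : ∫ s in (0:ℝ)..t, K t s (U s) = ∫ s in (0:ℝ)..t, K' t s (U' s) :=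
    intervalIntegral.integral_congr fun s hs => by
      rw [uIcc_of_le ht.1] at hs
      rw [hK t ht s hs, hU ⟨hs.1, hs.2.trans ht.2⟩]
  rw [hU ht, ha ht, hint]

theorem isVolterraSolution_iccExtend_iff (hT : 0 ≤ T) (ha : Continuous a)
    (hK : Continuous fun p : ℝ × ℝ => K p.1 p.2) (x : C(Icc 0 T, E)) :
    IsVolterraSolution T a K (IccExtend hT x) ↔
      Function.IsFixedPt (volterraOperator hT ha hK) x := by
  rw [Function.IsFixedPt, ContinuousMap.ext_iff]
  simp only [IsVolterraSolution, x.continuous.Icc_extend'.continuousOn, true_and,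
    volterraOperator_apply, Subtype.forall]
  refine forall₂_congr fun t ht => ?_
  rw [IccExtend_of_mem hT x ht, eq_comm]

theorem exists_isVolterraSolution_unique_of_continuous [CompleteSpace E] (hT : 0 ≤ T)
    (ha : Continuous a) (hK : Continuous fun p : ℝ × ℝ => K p.1 p.2) :
    ∃ U, IsVolterraSolution T a K U ∧
      ∀ V, IsVolterraSolution T a K V → EqOn U V (Icc 0 T) := by
  obtain ⟨x, hx, huniq⟩ := existsUnique_isFixedPt_volterraOperator hT ha hK
  refine ⟨IccExtend hT x, (isVolterraSolution_iccExtend_iff hT ha hK x).2 hx, fun V hV => ?_⟩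
  let y : C(Icc 0 T, E) := ⟨(Icc 0 T).domRestrict V, hV.1.domRestrict⟩
  have hVy : EqOn V (IccExtend hT y) (Icc 0 T) := fun t ht => (IccExtend_of_mem hT y ht).symm
  have hy : Function.IsFixedPt (volterraOperator hT ha hK) y :=
    (isVolterraSolution_iccExtend_iff hT ha hK y).1
      ((isVolterraSolution_congr (eqOn_refl _ _) (fun _ _ _ _ => rfl) hVy).1 hV)
  rw [← huniq y hy]
  exact hVy.symm

theorem exists_isVolterraSolution_unique [CompleteSpace E] (hT : 0 ≤ T)
    (ha : ContinuousOn a (Icc 0 T))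
    (hK : ContinuousOn (fun p : ℝ × ℝ => K p.1 p.2) {p | 0 ≤ p.2 ∧ p.2 ≤ p.1 ∧ p.1 ≤ T}) :
    ∃ U, IsVolterraSolution T a K U ∧
      ∀ V, IsVolterraSolution T a K V → EqOn U V (Icc 0 T) := by
  let c : ℝ → ℝ := fun u => projIcc 0 T hT u
  have hc : Continuous c := continuous_subtype_val.comp continuous_projIcc
  have hc_mem (u : ℝ) : c u ∈ Icc 0 T := (projIcc 0 T hT u).2
  have hc_id : EqOn c id (Icc 0 T) := fun u hu => congrArg Subtype.val (projIcc_of_mem hT hu)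
  -- `(t, s) ↦ (max (c t) (c s), c s)` retracts the plane onto the triangle `0 ≤ s ≤ t ≤ T`
  let r : ℝ × ℝ → ℝ × ℝ := fun p => (max (c p.1) (c p.2), c p.2)
  have hr : Continuous r := by fun_prop
  have hr_mem (p : ℝ × ℝ) : 0 ≤ (r p).2 ∧ (r p).2 ≤ (r p).1 ∧ (r p).1 ≤ T :=
    ⟨(hc_mem _).1, le_max_right _ _, max_le (hc_mem _).2 (hc_mem _).2⟩
  have hsol (V : ℝ → E) : IsVolterraSolution T (a ∘ c) (fun t s => K (r (t, s)).1 (r (t, s)).2) V ↔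
      IsVolterraSolution T a K V := by
    refine isVolterraSolution_congr (fun t ht => by simp [hc_id ht]) (fun t ht s hs => ?_)
      (eqOn_refl _ _)
    simp only [r, hc_id ht, hc_id ⟨hs.1, hs.2.trans ht.2⟩, id, max_eq_left hs.2]
  obtain ⟨U, hU, huniq⟩ := exists_isVolterraSolution_unique_of_continuous
    (K := fun t s => K (r (t, s)).1 (r (t, s)).2) hT (ha.comp_continuous hc hc_mem)
    (hK.comp_continuous hr hr_mem)
  exact ⟨U, (hsol U).1 hU, fun V hV => huniq V ((hsol V).2 hV)⟩

theorem intervalIntegrable_apply_of_continuousOn {U : ℝ → E}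
    (hK : ContinuousOn (fun p : ℝ × ℝ => K p.1 p.2) {p | 0 ≤ p.2 ∧ p.2 ≤ p.1 ∧ p.1 ≤ T})
    (hU : ContinuousOn U (Icc 0 T)) {t : ℝ} (ht : t ∈ Icc 0 T) :
    IntervalIntegrable (fun s => K t s (U s)) volume 0 t := by
  refine ContinuousOn.intervalIntegrable ?_
  rw [uIcc_of_le ht.1]
  exact (hK.comp (continuousOn_const.prodMk continuousOn_id)
    fun s hs => ⟨hs.1, hs.2, ht.2⟩).clm_apply (hU.mono (Icc_subset_Icc_right ht.2))

end VolterraSolution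

theorem stmt_6_general {E : Type*} [NormedAddCommGroup E] [NormedSpace ℝ E] [CompleteSpace E]
    (T : ℝ) (hT : 0 < T)
    (a : ℝ → E) (ha : ContinuousOn a (Icc 0 T))
    (b σ : ℝ → ℝ → E →L[ℝ] E)
    (hbcont : ContinuousOn (fun p : ℝ × ℝ => b p.1 p.2)
      {p : ℝ × ℝ | 0 ≤ p.2 ∧ p.2 ≤ p.1 ∧ p.1 ≤ T})
    (hσcont : ContinuousOn (fun p : ℝ × ℝ => σ p.1 p.2)
      {p : ℝ × ℝ | 0 ≤ p.2 ∧ p.2 ≤ p.1 ∧ p.1 ≤ T})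
    (N : ℝ → E →L[ℝ] E) (hN : ContinuousOn N (Icc 0 T)) :
    ∃ U : ℝ → E,
      (ContinuousOn U (Icc 0 T) ∧
        ∀ t ∈ Icc (0:ℝ) T,
          U t = a t + (∫ s in (0:ℝ)..t, b t s (U s)) + ∫ s in (0:ℝ)..t, σ t s (N s (U s))) ∧
      ∀ V : ℝ → E,
        (ContinuousOn V (Icc 0 T) ∧
          ∀ t ∈ Icc (0:ℝ) T,
            V t = a t + (∫ s in (0:ℝ)..t, b t s (V s)) + ∫ s in (0:ℝ)..t, σ t s (N s (V s))) →
        EqOn U V (Icc 0 T) := by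
  have hσN : ContinuousOn (fun p : ℝ × ℝ => (σ p.1 p.2).comp (N p.2))
      {p : ℝ × ℝ | 0 ≤ p.2 ∧ p.2 ≤ p.1 ∧ p.1 ≤ T} :=
    hσcont.clm_comp (hN.comp continuousOn_snd fun p hp => ⟨hp.1, hp.2.1.trans hp.2.2⟩)
  have hsol (V : ℝ → E) (hV : ContinuousOn V (Icc 0 T)) :
      IsVolterraSolution T a (fun t s => b t s + (σ t s).comp (N s)) V ↔
        ∀ t ∈ Icc (0:ℝ) T,
          V t = a t + (∫ s in (0:ℝ)..t, b t s (V s)) + ∫ s in (0:ℝ)..t, σ t s (N s (V s)) := by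
    refine (and_iff_right hV).trans (forall₂_congr fun t ht => ?_)
    have hsplit : ∫ s in (0:ℝ)..t, (b t s + (σ t s).comp (N s)) (V s) =
        (∫ s in (0:ℝ)..t, b t s (V s)) + ∫ s in (0:ℝ)..t, σ t s (N s (V s)) :=
      intervalIntegral.integral_add (intervalIntegrable_apply_of_continuousOn hbcont hV ht)
        (intervalIntegrable_apply_of_continuousOn (K := fun t s => (σ t s).comp (N s)) hσN hV ht)
    rw [add_assoc, ← hsplit]
  obtain ⟨U, hU, huniq⟩ := exists_isVolterraSolution_unique
    (K := fun t s => b t s + (σ t s).comp (N s)) hT.le ha (hbcont.add hσN)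
  exact ⟨U, ⟨hU.1, (hsol U hU.1).1 hU⟩, fun V hV => huniq V ((hsol V hV.1).2 hV.2)⟩

/-- Theorem 4.2 (abstract form): existence and uniqueness of a continuous solution to the
stochastic Volterra equation
`U(t) = a(t) + ∫₀ᵗ b(t,s)(U(s)) ds + ∫₀ᵗ σ(t,s)(N(s)(U(s))) ds` on `[0, T]`. -/
theorem stmt_6 {E : Type*} [NormedAddCommGroup E] [NormedSpace ℝ E] [CompleteSpace E]
    (T M : ℝ) (hT : 0 < T) (hM : 0 < M)
    (a : ℝ → E) (ha : ContinuousOn a (Icc 0 T))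
    (b σ : ℝ → ℝ → E →L[ℝ] E)
    (hbcont : ContinuousOn (fun p : ℝ × ℝ => b p.1 p.2)
      {p : ℝ × ℝ | 0 ≤ p.2 ∧ p.2 ≤ p.1 ∧ p.1 ≤ T})
    (hσcont : ContinuousOn (fun p : ℝ × ℝ => σ p.1 p.2)
      {p : ℝ × ℝ | 0 ≤ p.2 ∧ p.2 ≤ p.1 ∧ p.1 ≤ T})
    (hbbd : ∀ s t : ℝ, 0 ≤ s → s ≤ t → t ≤ T → ‖b t s‖ ≤ M)
    (hσbd : ∀ s t : ℝ, 0 ≤ s → s ≤ t → t ≤ T → ‖σ t s‖ ≤ M)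
    (N : ℝ → E →L[ℝ] E) (hN : ContinuousOn N (Icc 0 T)) :
    ∃ U : ℝ → E,
      (ContinuousOn U (Icc 0 T) ∧
        ∀ t ∈ Icc (0:ℝ) T,
          U t = a t + (∫ s in (0:ℝ)..t, b t s (U s)) + ∫ s in (0:ℝ)..t, σ t s (N s (U s))) ∧
      ∀ V : ℝ → E,
        (ContinuousOn V (Icc 0 T) ∧
          ∀ t ∈ Icc (0:ℝ) T,
            V t = a t + (∫ s in (0:ℝ)..t, b t s (V s)) + ∫ s in (0:ℝ)..t, σ t s (N s (V s))) →
        EqOn U V (Icc 0 T) :=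
  stmt_6_general T hT a ha b σ hbcont hσcont N hN
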